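/- arXiv:1307.0169 — 6 statements merged into one kernel-verified Lean document; each statement's English description precedes it below -/
import Mathlib

section
/- For every integer n ≥ 0, the number of partitions p(n) satisfies the Durfee square identity: the generating function ∑ p(n) qⁿ equals 1 + ∑_{n≥1} q^{n²}/((1-q)²(1-q²)²⋯(1-qⁿ)²) as formal power series. -/
/-!
A partition whose Durfee square has side `d` (the largest `d` such that at least `d` parts
are `≥ d`) splits into the `d × d` square, the partition `A` to its right, obtained by deleting
the first `d` columns, which has at most `d` parts, and the partition `B` formed by the parts
below the square, all of which are `≤ d`. This is a bijection onto the pairs `(A, B)` of this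
kind with `|A| + |B| = n - d²`. Partitions into parts `≤ d` have generating function
`∏_{k ≤ d} (1 - q^k)⁻¹`, and so do partitions into at most `d` parts: deleting the first column
of a partition of `n` into exactly `d` parts leaves a partition of `n - d` into at most `d`
parts, which yields the factor `(1 - q^d)⁻¹` by induction on `d`. Summing over `d` gives the
identity, the term `1` being `d = 0`.
-/

namespace Multiset

theorem mul_countP_le_sum (s : Multiset ℕ) (d : ℕ) : d * s.countP (d ≤ ·) ≤ s.sum := by
  have hfilter : d * s.countP (d ≤ ·) ≤ (s.filter (d ≤ ·)).sum := by
    rw [countP_eq_card_filter, mul_comm, ← smul_eq_mul]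
    exact card_nsmul_le_sum fun x hx => (mem_filter.mp hx).2
  have hsplit := congrArg sum (filter_add_not (d ≤ ·) s)
  rw [sum_add] at hsplit
  omega

theorem filter_le_add_filter_lt (s : Multiset ℕ) (d : ℕ) :
    s.filter (· ≤ d) + s.filter (d < ·) = s := by
  simpa only [not_le] using filter_add_not (· ≤ d) s

theorem countP_le_eq_count_add_countP_lt (s : Multiset ℕ) (d : ℕ) :
    s.countP (d ≤ ·) = s.count d + s.countP (d < ·) := by
  induction s using Multiset.induction_on with
  | empty => simp
  | cons a s ih =>
    simp only [countP_cons, count_cons, ih]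
    split_ifs <;> omega

end Multiset

namespace Finset

theorem prod_Icc_one_eq_prod_range {M : Type*} [CommMonoid M] (f : ℕ → M) (d : ℕ) :
    ∏ i ∈ Icc 1 d, f i = ∏ i ∈ range d, f (i + 1) := by
  rw [range_eq_Ico, prod_Ico_add' f 0 d 1, zero_add, ← Order.succ_eq_add_one d,
    Ico_succ_right_eq_Icc]

end Finset

namespace Nat.Partition

section Columns

open Multiset

/-- Reading `s` as the rows of a Young diagram, this deletes its first `d` columns; `addColumns d k`
glues a `k × d` rectangle to the left of a diagram with at most `k` rows. -/
def dropColumns (d : ℕ) (s : Multiset ℕ) : Multiset ℕ :=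
  (s.filter (d < ·)).map (· - d)

variable {d k : ℕ} {s A B C : Multiset ℕ}

theorem pos_of_mem_dropColumns {a : ℕ} (h : a ∈ dropColumns d s) : 0 < a := by
  obtain ⟨x, hx, rfl⟩ := mem_map.mp h
  exact Nat.sub_pos_of_lt (mem_filter.mp hx).2

theorem card_dropColumns : card (dropColumns d s) = s.countP (d < ·) := by
  rw [dropColumns, card_map, countP_eq_card_filter]

theorem dropColumns_map_add : (dropColumns d s).map (· + d) = s.filter (d < ·) := by
  rw [dropColumns, map_map]
  conv_rhs => rw [← map_id (s.filter (d < ·))]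
  exact map_congr rfl fun x hx => Nat.sub_add_cancel (mem_filter.mp hx).2.le

def addColumns (d k : ℕ) (A : Multiset ℕ) : Multiset ℕ :=
  A.map (· + d) + replicate (k - card A) d

theorem card_addColumns (h : card A ≤ k) : card (addColumns d k A) = k := by
  rw [addColumns, card_add, card_map, card_replicate]
  omega

theorem sum_addColumns (h : card A ≤ k) : (addColumns d k A).sum = A.sum + k * d := by
  rw [addColumns, sum_add, sum_map_add, map_id', map_const', sum_replicate, sum_replicate,
    smul_eq_mul, smul_eq_mul, add_assoc, ← Nat.add_mul, Nat.add_sub_cancel' h]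

theorem le_of_mem_addColumns {a : ℕ} (h : a ∈ addColumns d k A) : d ≤ a := by
  rcases mem_add.mp h with h | h
  · obtain ⟨x, -, rfl⟩ := mem_map.mp h
    exact Nat.le_add_left d x
  · exact (eq_of_mem_replicate h).ge

theorem pos_of_mem_addColumns_self {a : ℕ} (hA : ∀ a ∈ A, 0 < a)
    (h : a ∈ addColumns d d A) : 0 < a := by
  rcases mem_add.mp h with h | h
  · obtain ⟨x, hx, rfl⟩ := mem_map.mp h
    exact Nat.add_pos_left (hA x hx) d
  · obtain ⟨hne, rfl⟩ := mem_replicate.mp h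
    omega

theorem dropColumns_addColumns_add (hA : ∀ a ∈ A, 0 < a) (hC : ∀ c ∈ C, c ≤ d) :
    dropColumns d (addColumns d k A + C) = A := by
  have hfilter : (addColumns d k A + C).filter (d < ·) = A.map (· + d) := by
    rw [addColumns, add_assoc, filter_add, filter_eq_self.mpr, filter_eq_nil.mpr, add_zero]
    · intro c hc
      rcases mem_add.mp hc with hc | hc
      · exact not_lt.mpr (eq_of_mem_replicate hc).le
      · exact not_lt.mpr (hC c hc)
    · intro x hx
      obtain ⟨a, ha, rfl⟩ := mem_map.mp hx
      exact Nat.lt_add_of_pos_left (hA a ha)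
  rw [dropColumns, hfilter, map_map]
  conv_rhs => rw [← map_id A]
  exact map_congr rfl fun x _ => Nat.add_sub_cancel x d

theorem addColumns_dropColumns :
    addColumns d k (dropColumns d s) = s.filter (d < ·) + replicate (k - s.countP (d < ·)) d := by
  rw [addColumns, dropColumns_map_add, card_dropColumns]

theorem addColumns_one_dropColumns_one (hs : ∀ a ∈ s, 0 < a) :
    addColumns 1 (card s) (dropColumns 1 s) = s := by
  have hcard : s.countP (· ≤ 1) + s.countP (1 < ·) = card s := by
    simpa only [card_add, countP_eq_card_filter] using congrArg card (filter_le_add_filter_lt s 1)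
  have hones : s.filter (· ≤ 1) = replicate (card s - s.countP (1 < ·)) 1 :=
    eq_replicate.mpr ⟨by rw [← countP_eq_card_filter]; omega, fun b hb => by
      have := hs b (mem_of_mem_filter hb)
      have := (mem_filter.mp hb).2
      omega⟩
  rw [addColumns_dropColumns, ← hones, add_comm, filter_le_add_filter_lt]

/-- When `d` is the Durfee size of `s`, this removes the `d` largest parts of `s`. -/
def dropRows (d : ℕ) (s : Multiset ℕ) : Multiset ℕ :=
  s.filter (· ≤ d) - replicate (d - s.countP (d < ·)) d

theorem le_of_mem_dropRows {a : ℕ} (h : a ∈ dropRows d s) : a ≤ d :=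
  (mem_filter.mp (mem_of_le (Multiset.sub_le_self _ _) h)).2

theorem mem_of_mem_dropRows {a : ℕ} (h : a ∈ dropRows d s) : a ∈ s :=
  mem_of_mem_filter (mem_of_le (Multiset.sub_le_self _ _) h)

theorem addColumns_dropColumns_add_dropRows (h : d ≤ s.countP (d ≤ ·)) :
    addColumns d d (dropColumns d s) + dropRows d s = s := by
  have hcount := s.countP_le_eq_count_add_countP_lt d
  have hle : replicate (d - s.countP (d < ·)) d ≤ s.filter (· ≤ d) := by
    rw [← le_count_iff_replicate_le, count_filter_of_pos (p := (· ≤ d)) le_rfl]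
    omega
  rw [addColumns_dropColumns, dropRows, add_assoc, add_tsub_cancel_of_le hle, add_comm,
    filter_le_add_filter_lt]

theorem sum_dropColumns_add_sum_dropRows (h₁ : d ≤ s.countP (d ≤ ·))
    (h₂ : s.countP (d < ·) ≤ d) :
    (dropColumns d s).sum + (dropRows d s).sum + d * d = s.sum := by
  conv_rhs => rw [← addColumns_dropColumns_add_dropRows h₁]
  rw [sum_add, sum_addColumns (card_dropColumns ▸ h₂)]
  ring

theorem dropRows_addColumns_add (hA : ∀ a ∈ A, 0 < a)
    (hB : ∀ b ∈ B, b ≤ d) : dropRows d (addColumns d d A + B) = B := by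
  have hlt : (addColumns d d A + B).countP (d < ·) = card A := by
    rw [← card_dropColumns, dropColumns_addColumns_add hA hB]
  have hle : (addColumns d d A + B).filter (· ≤ d) = replicate (d - card A) d + B := by
    rw [addColumns, add_assoc, filter_add, filter_eq_nil.mpr, zero_add, filter_add,
      filter_eq_self.mpr, filter_eq_self.mpr hB]
    · exact fun c hc => (eq_of_mem_replicate hc).le
    · intro x hx
      obtain ⟨a, ha, rfl⟩ := mem_map.mp hx
      exact not_le.mpr (Nat.lt_add_of_pos_left (hA a ha))
  rw [dropRows, hlt, hle, add_tsub_cancel_left]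

end Columns

open Finset PowerSeries

variable {n d k : ℕ}

def durfeeSize (p : n.Partition) : ℕ :=
  Nat.findGreatest (fun d => d ≤ p.parts.countP (d ≤ ·)) n

theorem durfeeSize_eq_iff {p : n.Partition} :
    p.durfeeSize = d ↔ d ≤ p.parts.countP (d ≤ ·) ∧ p.parts.countP (d < ·) ≤ d := by
  have hsum := p.parts_sum ▸ p.parts.mul_countP_le_sum
  have hanti {j k : ℕ} (h : j ≤ k) : p.parts.countP (k ≤ ·) ≤ p.parts.countP (j ≤ ·) := by
    simpa only [Multiset.countP_eq_card_filter] using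
      Multiset.card_le_card (Multiset.monotone_filter_right _ fun _ => h.trans)
  rw [durfeeSize, Nat.findGreatest_eq_iff]
  constructor
  · rintro ⟨-, hd, hgt⟩
    refine ⟨?_, ?_⟩
    · rcases Nat.eq_zero_or_pos d with rfl | hpos
      · exact Nat.zero_le _
      · exact hd hpos.ne'
    · rcases Nat.lt_or_ge d n with hlt | hge
      · have := hgt (lt_add_one d) hlt
        simp only [Nat.lt_iff_add_one_le] at this ⊢
        omega
      · have hnone : p.parts.countP (d < ·) = 0 :=
          Multiset.countP_eq_zero.mpr fun a ha => not_lt.mpr ((p.le_of_mem_parts ha).trans hge)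
        omega
  · rintro ⟨hd, hlt⟩
    refine ⟨?_, fun _ => hd, fun k hdk _ hk => ?_⟩
    · rcases Nat.eq_zero_or_pos d with rfl | hpos
      · exact Nat.zero_le n
      · nlinarith [hsum d]
    · have := hanti (Nat.succ_le_of_lt hdk)
      simp only [Nat.succ_le_iff] at this
      omega

theorem durfeeSize_le (p : n.Partition) : p.durfeeSize ≤ n :=
  Nat.findGreatest_le n

theorem durfeeSize_mul_self_le (p : n.Partition) : p.durfeeSize * p.durfeeSize ≤ n := by
  have hsum := p.parts.mul_countP_le_sum p.durfeeSize
  rw [p.parts_sum] at hsum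
  exact (Nat.mul_le_mul_left _ (durfeeSize_eq_iff.mp rfl).1).trans hsum

theorem card_parts_le (p : n.Partition) : Multiset.card p.parts ≤ n := by
  simpa [p.parts_sum] using
    Multiset.card_nsmul_le_sum (s := p.parts) (a := 1) fun _ hx => p.parts_pos hx

def lengthLE (n d : ℕ) : Finset n.Partition :=
  univ.filter fun p => Multiset.card p.parts ≤ d

theorem card_filter_card_parts_eq (hk : k ≤ n) :
    #{p : n.Partition | Multiset.card p.parts = k} = #(lengthLE (n - k) k) := by
  refine card_bij'
    (fun p hp => ⟨dropColumns 1 p.parts, pos_of_mem_dropColumns, ?_⟩)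
    (fun q hq => ⟨addColumns 1 k q.parts, fun h => le_of_mem_addColumns h, ?_⟩)
    ?_ ?_ ?_ ?_
  · have hsum := congrArg Multiset.sum (addColumns_one_dropColumns_one fun _ => p.parts_pos)
    rw [sum_addColumns (card_dropColumns ▸ Multiset.countP_le_card _ _), p.parts_sum,
      (mem_filter.mp hp).2] at hsum
    omega
  · rw [sum_addColumns (mem_filter.mp hq).2, q.parts_sum]
    omega
  · intro p hp
    simp only [lengthLE, mem_filter, mem_univ, true_and]
    exact (card_dropColumns.trans_le (Multiset.countP_le_card _ _)).trans (mem_filter.mp hp).2.le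
  · intro q hq
    simp only [mem_filter, mem_univ, true_and]
    exact card_addColumns (mem_filter.mp hq).2
  · intro p hp
    ext1
    dsimp only
    rw [← (mem_filter.mp hp).2]
    exact addColumns_one_dropColumns_one fun _ => p.parts_pos
  · intro q hq
    ext1
    simpa using dropColumns_addColumns_add (C := 0) (fun _ => q.parts_pos) (by simp)

theorem card_lengthLE_zero : #(lengthLE n 0) = if n = 0 then 1 else 0 := by
  split_ifs with hn
  · subst hn
    exact card_eq_one.mpr ⟨default, eq_singleton_iff_unique_mem.mpr
      ⟨by simp [lengthLE], fun _ _ => Subsingleton.elim _ _⟩⟩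
  · refine Finset.card_eq_zero.mpr (filter_eq_empty_iff.mpr fun p _ hp => hn ?_)
    rw [← p.parts_sum, Multiset.card_eq_zero.mp (Nat.le_zero.mp hp), Multiset.sum_zero]

theorem card_lengthLE_succ :
    #(lengthLE n (d + 1)) =
      #(lengthLE n d) + if d + 1 ≤ n then #(lengthLE (n - (d + 1)) (d + 1)) else 0 := by
  have hsplit : lengthLE n (d + 1) =
      lengthLE n d ∪ univ.filter fun p => Multiset.card p.parts = d + 1 := by
    ext p
    simp only [lengthLE, mem_union, mem_filter, mem_univ, true_and]
    omega
  rw [hsplit, card_union_of_disjoint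
    (by unfold lengthLE; exact disjoint_filter.mpr fun _ _ h => by omega)]
  split_ifs with h
  · rw [card_filter_card_parts_eq h]
  · rw [Finset.card_eq_zero.mpr (filter_eq_empty_iff.mpr
      fun p _ (hp : Multiset.card p.parts = d + 1) => h (hp ▸ p.card_parts_le)), add_zero]

theorem powerSeriesMk_card_lengthLE_mul_prod (R : Type*) [CommRing R] (d : ℕ) :
    (PowerSeries.mk fun n => (#(lengthLE n d) : R)) * ∏ i ∈ Icc 1 d, (1 - X ^ i) = 1 := by
  induction d with
  | zero =>
    ext n
    simp [card_lengthLE_zero, coeff_one]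
  | succ d ih =>
    have hstep : (PowerSeries.mk fun n => (#(lengthLE n (d + 1)) : R)) * (1 - X ^ (d + 1)) =
        PowerSeries.mk fun n => (#(lengthLE n d) : R) := by
      ext n
      rw [mul_sub, mul_one, map_sub, mul_comm, coeff_X_pow_mul', coeff_mk, coeff_mk,
        coeff_mk, card_lengthLE_succ]
      split_ifs <;> push_cast <;> ring
    rw [prod_Icc_succ_top (by omega), mul_comm _ (1 - X ^ (d + 1)), ← mul_assoc, hstep, ih]

open PowerSeries.WithPiTopology in
theorem powerSeriesMk_card_restricted_le_mul_prod (R : Type*) [CommRing R] (d : ℕ) :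
    (PowerSeries.mk fun n => (#(restricted n (· ≤ d)) : R)) * ∏ i ∈ Icc 1 d, (1 - X ^ i) =
      1 := by
  -- Mathlib's generating function is an infinite product; any Hausdorff topology evaluates it.
  let _ : TopologicalSpace R := ⊥
  have : DiscreteTopology R := ⟨rfl⟩
  have hprod := (hasProd_powerSeriesMk_card_restricted R (· ≤ d)).unique
    (hasProd_prod_of_ne_finset_one (s := range d) fun i hi => if_neg (by simpa using hi))
  rw [hprod, Finset.prod_Icc_one_eq_prod_range, ← prod_mul_distrib]
  refine prod_eq_one fun i hi => ?_
  rw [if_pos (by simpa [Nat.add_one_le_iff] using hi)]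
  simp_rw [pow_mul]
  exact tsum_pow_mul_one_sub_of_constantCoeff_eq_zero (by simp)

theorem sigma_eq_of_parts_eq {a b a' b' : ℕ} {A : a.Partition} {B : b.Partition}
    {A' : a'.Partition} {B' : b'.Partition} (hA : A.parts = A'.parts) (hB : B.parts = B'.parts) :
    (⟨(a, b), (A, B)⟩ : Σ ab : ℕ × ℕ, ab.1.Partition × ab.2.Partition) =
      ⟨(a', b'), (A', B')⟩ := by
  cases A; cases B; cases A'; cases B'
  subst_vars
  rfl

theorem card_durfeeSize_eq_sum (h : d * d ≤ n) :
    #{p : n.Partition | p.durfeeSize = d} =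
      ∑ ab ∈ antidiagonal (n - d * d), #(lengthLE ab.1 d) * #(restricted ab.2 (· ≤ d)) := by
  set T := (antidiagonal (n - d * d)).sigma fun ab =>
    lengthLE ab.1 d ×ˢ restricted ab.2 (· ≤ d)
  have hT : ∀ x, x ∈ T ↔ x.1.1 + x.1.2 = n - d * d ∧ Multiset.card x.2.1.parts ≤ d ∧
      ∀ i ∈ x.2.2.parts, i ≤ d := by
    intro x
    simp [T, lengthLE, restricted]
  have hcardT : #T =
      ∑ ab ∈ antidiagonal (n - d * d), #(lengthLE ab.1 d) * #(restricted ab.2 (· ≤ d)) := by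
    simp only [T, Finset.card_sigma, Finset.card_product]
  rw [← hcardT]
  refine card_bij'
    (fun p _ => ⟨((dropColumns d p.parts).sum, (dropRows d p.parts).sum),
      ⟨dropColumns d p.parts, pos_of_mem_dropColumns, rfl⟩,
      ⟨dropRows d p.parts, fun h => p.parts_pos (mem_of_mem_dropRows h), rfl⟩⟩)
    (fun x hx => ⟨addColumns d d x.2.1.parts + x.2.2.parts,
      fun h => ?_, ?_⟩)
    ?_ ?_ ?_ ?_
  · exact (Multiset.mem_add.mp h).elim (pos_of_mem_addColumns_self fun _ => x.2.1.parts_pos)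
      x.2.2.parts_pos
  · obtain ⟨hsum, hA, -⟩ := (hT x).mp hx
    rw [Multiset.sum_add, sum_addColumns hA, x.2.1.parts_sum, x.2.2.parts_sum]
    omega
  · intro p hp
    obtain ⟨h₁, h₂⟩ := durfeeSize_eq_iff.mp (mem_filter.mp hp).2
    refine (hT _).mpr ⟨?_, card_dropColumns.trans_le h₂, fun _ => le_of_mem_dropRows⟩
    have := sum_dropColumns_add_sum_dropRows h₁ h₂
    rw [p.parts_sum] at this
    dsimp only
    omega
  · intro x hx
    obtain ⟨-, hA, hB⟩ := (hT x).mp hx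
    have hApos : ∀ a ∈ x.2.1.parts, 0 < a := fun _ => x.2.1.parts_pos
    refine mem_filter.mpr ⟨mem_univ _, durfeeSize_eq_iff.mpr ⟨?_, ?_⟩⟩
    · calc d = Multiset.card (addColumns d d x.2.1.parts) := (card_addColumns hA).symm
        _ = (addColumns d d x.2.1.parts).countP (d ≤ ·) :=
          (Multiset.countP_eq_card.mpr fun _ => le_of_mem_addColumns).symm
        _ ≤ _ := Multiset.countP_le_of_le _ (Multiset.le_add_right _ _)
    · rw [← card_dropColumns, dropColumns_addColumns_add hApos hB]
      exact hA
  · intro p hp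
    ext1
    exact addColumns_dropColumns_add_dropRows (durfeeSize_eq_iff.mp (mem_filter.mp hp).2).1
  · intro x hx
    obtain ⟨-, -, hB⟩ := (hT x).mp hx
    have hApos : ∀ a ∈ x.2.1.parts, 0 < a := fun _ => x.2.1.parts_pos
    obtain ⟨⟨a, b⟩, A, B⟩ := x
    exact sigma_eq_of_parts_eq (dropColumns_addColumns_add hApos hB)
      (dropRows_addColumns_add hApos hB)

theorem card_durfeeSize_eq_coeff (K : Type*) [Field K] (n d : ℕ) :
    (#{p : n.Partition | p.durfeeSize = d} : K) =
      coeff n (X ^ (d ^ 2) * (∏ k ∈ Icc 1 d, (1 - X ^ k : K⟦X⟧) ^ 2)⁻¹) := by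
  set P := ∏ k ∈ Icc 1 d, (1 - X ^ k : K⟦X⟧)
  have hconst : constantCoeff P ≠ 0 := by
    intro h
    have := congrArg constantCoeff (powerSeriesMk_card_lengthLE_mul_prod K d)
    rw [map_mul, h, mul_zero, map_one] at this
    exact zero_ne_one this
  rw [prod_pow, sq P, PowerSeries.mul_inv_rev]
  nth_rw 1 [← (eq_inv_iff_mul_eq_one hconst).mpr (powerSeriesMk_card_lengthLE_mul_prod K d)]
  rw [← (eq_inv_iff_mul_eq_one hconst).mpr (powerSeriesMk_card_restricted_le_mul_prod K d),
    sq, coeff_X_pow_mul']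
  split_ifs with h
  · rw [card_durfeeSize_eq_sum h, coeff_mul]
    simp
  · rw [Finset.card_eq_zero.mpr (filter_eq_empty_iff.mpr
      fun p _ (hp : p.durfeeSize = d) => h (hp ▸ p.durfeeSize_mul_self_le)), Nat.cast_zero]

end Nat.Partition

open PowerSeries

theorem durfee_square_identity :
    ∀ N : ℕ,
      ((Fintype.card (Nat.Partition N) : ℚ)) =
        PowerSeries.coeff N
          (1 + ∑ n ∈ Finset.Icc 1 N,
            (PowerSeries.X : PowerSeries ℚ) ^ (n ^ 2) *
              (∏ k ∈ Finset.Icc 1 n, (1 - (PowerSeries.X : PowerSeries ℚ) ^ k) ^ 2)⁻¹) := by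
  intro N
  rw [← Finset.card_univ, Finset.card_eq_sum_card_fiberwise (t := Finset.range (N + 1))
    fun p _ => Finset.mem_range.mpr (Nat.lt_succ_of_le p.durfeeSize_le)]
  rw [Finset.range_eq_Ico, Finset.sum_eq_sum_Ico_succ_bot N.succ_pos, zero_add,
    ← Nat.succ_eq_succ, Finset.Ico_succ_right_eq_Icc]
  simp_rw [Nat.cast_add, Nat.cast_sum, Nat.Partition.card_durfeeSize_eq_coeff, map_add, map_sum]
  simp
end

section
/- Let m, t, B, N be integers with m, N > 0. Write m = 2^u · 3^v · m' and B = 2^r · 3^s · B' with gcd(m',6) = gcd(B',6) = 1 (where if B = 0 we exclude this case, so assume B ≠ 0). Define α = 0 if r = 0, α = min(r,u) if r ∈ {1,2}, α = u if r ≥ 3; define β = 0 if s = 0 and β = v if s ≥ 1; and set Q = 2^α · 3^β · m'. Then for every integer λ with 0 ≤ λ < m/Q, there exists an integer a with gcd(a, 6mN) = 1 such that 24(t + λQ) ≡ 24t·a² + B(a² − 1) (mod 24m). -/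
/-! Put `w = 24 t + B` and `T = 24 λ Q`; the congruence becomes `w (a² - 1) ≡ T (mod 24 m)` with
`24 m = 2^(u+3) 3^(v+1) m'`, and by the Chinese remainder theorem it suffices to solve it
with a unit `a` modulo each of the three coprime factors. Modulo `m'`, and modulo `p^k`
whenever `p^k ∣ T`, `a = 1` works. Otherwise the definition of `Q` guarantees `w = p^α w₀`
and `T = p^α T₀` with `w₀` prime to `p` and `4 p ∣ T₀`, so one needs `a² ≡ 1 + w₀⁻¹ T₀`:
a square by Hensel lifting. A unit modulo `24 m` finally lifts to a unit modulo `24 m N`. -/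

theorem Int.ModEq.isCoprime {a b n : ℤ} (h : a ≡ b [ZMOD n]) (hb : IsCoprime b n) :
    IsCoprime a n := by
  obtain ⟨k, hk⟩ := h.dvd
  simpa [← hk] using hb.add_mul_left_left (-k)

theorem Int.exists_modEq_modEq_of_isCoprime {M N : ℤ} (h : IsCoprime M N) (a b : ℤ) :
    ∃ c, c ≡ a [ZMOD M] ∧ c ≡ b [ZMOD N] := by
  obtain ⟨p, q, hpq⟩ := h
  refine ⟨a * q * N + b * p * M, Int.modEq_iff_dvd.2 ⟨(a - b) * p, ?_⟩,
    Int.modEq_iff_dvd.2 ⟨(b - a) * q, ?_⟩⟩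
  · linear_combination (-a) * hpq
  · linear_combination (-b) * hpq

theorem Int.exists_sq_modEq_of_modEq_one {n x : ℤ} (hx : x ≡ 1 [ZMOD 4 * n]) (k : ℕ) :
    ∃ a, a ≡ 1 [ZMOD n] ∧ a ^ 2 ≡ x [ZMOD 4 * n ^ (k + 1)] := by
  induction k with
  | zero => exact ⟨1, rfl, by simpa using hx.symm⟩
  | succ k ih =>
    obtain ⟨a, ha₁, ha⟩ := ih
    obtain ⟨d, hd⟩ := ha.dvd
    obtain ⟨e, he⟩ := ha₁.dvd
    refine ⟨a + n * (2 * d * n ^ k), ?_, Int.modEq_iff_dvd.2 ⟨d * e - d ^ 2 * n ^ k, ?_⟩⟩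
    · exact Int.modEq_add_fac_self.trans ha₁
    · -- Since `a ≡ 1 (mod n)`, adding `2 d n^(k+1)` to `a` cancels the error `4 d n^(k+1)`.
      linear_combination hd + 4 * d * n ^ (k + 1) * he

theorem Int.exists_modEq_isCoprime_mul {a M N : ℤ} (hN : N ≠ 0) (ha : IsCoprime a M) :
    ∃ b, b ≡ a [ZMOD M] ∧ IsCoprime b (M * N) := by
  rcases eq_or_ne M 0 with rfl | hM
  · exact ⟨a, rfl, by simpa using ha⟩
  have : NeZero (M * N).natAbs := ⟨by simp [hM, hN]⟩
  have hdvd : M.natAbs ∣ (M * N).natAbs := Int.natAbs_dvd_natAbs.2 (dvd_mul_right M N)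
  have hunit : IsUnit (a : ZMod M.natAbs) := by
    rw [ZMod.coe_int_isUnit_iff_isCoprime, Int.natCast_natAbs]
    exact ha.symm.abs_left
  obtain ⟨u, hu⟩ := ZMod.unitsMap_surjective hdvd hunit.unit
  obtain ⟨b, hb⟩ := ZMod.intCast_surjective (u : ZMod (M * N).natAbs)
  refine ⟨b, ?_, ?_⟩
  · rw [← Int.modEq_natAbs, ← ZMod.intCast_eq_intCast_iff]
    simpa [ZMod.unitsMap_def, ← hb] using congrArg Units.val hu
  · have := (ZMod.coe_int_isUnit_iff_isCoprime b _).1 (hb ▸ u.isUnit)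
    rw [Int.natCast_natAbs] at this
    exact (IsCoprime.abs_left_iff _ _).1 this |>.symm

def HasCoprimeSolution (w T M : ℤ) : Prop :=
  ∃ a, IsCoprime a M ∧ w * (a ^ 2 - 1) ≡ T [ZMOD M]

namespace HasCoprimeSolution

variable {w T M : ℤ}

theorem of_dvd (h : M ∣ T) : HasCoprimeSolution w T M :=
  ⟨1, isCoprime_one_left, by simpa using (Int.modEq_zero_iff_dvd.2 h).symm⟩

theorem of_isCoprime_pow {n : ℤ} (k : ℕ) (hw : IsCoprime w n) (hT : 4 * n ∣ T) :
    HasCoprimeSolution w T (n ^ k) := by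
  obtain ⟨c, q, hcq⟩ := hw.pow_right (n := k)
  have hc : w * c ≡ 1 [ZMOD n ^ k] := Int.modEq_iff_dvd.2 ⟨q, by linear_combination -hcq⟩
  have hx : 1 + c * T ≡ 1 [ZMOD 4 * n] := by
    simpa using (Int.modEq_zero_iff_dvd.2 (hT.mul_left c)).add_left 1
  obtain ⟨a, ha₁, ha⟩ := Int.exists_sq_modEq_of_modEq_one hx k
  refine ⟨a, (ha₁.isCoprime isCoprime_one_left).pow_right, ?_⟩
  have ha' : a ^ 2 ≡ 1 + c * T [ZMOD n ^ k] :=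
    ha.of_dvd (Dvd.intro_left (4 * n) (by ring))
  calc w * (a ^ 2 - 1) ≡ w * (1 + c * T - 1) [ZMOD n ^ k] := (ha'.sub_right 1).mul_left w
    _ = w * c * T := by ring
    _ ≡ 1 * T [ZMOD n ^ k] := hc.mul_right T
    _ = T := one_mul T

theorem pow_mul_left {p : ℤ} {i j : ℕ} (hj : j ≠ 0) (h : HasCoprimeSolution w T (p ^ j)) :
    HasCoprimeSolution (p ^ i * w) (p ^ i * T) (p ^ (i + j)) := by
  obtain ⟨a, ha, h⟩ := h
  have ha_p : IsCoprime a p := (IsCoprime.pow_right_iff (Nat.pos_of_ne_zero hj)).1 ha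
  refine ⟨a, ha_p.pow_right, ?_⟩
  rw [pow_add, mul_assoc]
  exact h.mul_left'

theorem of_pow_mul {n w₀ : ℤ} {α v : ℕ} (hα : α ≤ v) (hw₀ : IsCoprime w₀ n)
    (hT : 4 * n ^ (α + 1) ∣ T) : HasCoprimeSolution (n ^ α * w₀) T (n ^ (v + 1)) := by
  obtain ⟨k, rfl⟩ := hT
  have h := (of_isCoprime_pow (v + 1 - α) hw₀ (dvd_mul_right (4 * n) k)).pow_mul_left
    (i := α) (by omega)
  rw [show α + (v + 1 - α) = v + 1 by omega] at h
  convert h using 1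
  ring

theorem mul {M₁ M₂ : ℤ} (hM : IsCoprime M₁ M₂) (h₁ : HasCoprimeSolution w T M₁)
    (h₂ : HasCoprimeSolution w T M₂) : HasCoprimeSolution w T (M₁ * M₂) := by
  obtain ⟨a₁, ha₁, h₁⟩ := h₁
  obtain ⟨a₂, ha₂, h₂⟩ := h₂
  obtain ⟨a, haa₁, haa₂⟩ := Int.exists_modEq_modEq_of_isCoprime hM a₁ a₂
  refine ⟨a, (haa₁.isCoprime ha₁).mul_right (haa₂.isCoprime ha₂), ?_⟩
  rw [← Int.modEq_and_modEq_iff_modEq_mul (Int.isCoprime_iff_nat_coprime.1 hM)]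
  exact ⟨(((haa₁.pow 2).sub_right 1).mul_left w).trans h₁,
    (((haa₂.pow 2).sub_right 1).mul_left w).trans h₂⟩

theorem exists_isCoprime_mul {N : ℤ} (hN : N ≠ 0) (h : HasCoprimeSolution w T M) :
    ∃ a, IsCoprime a (M * N) ∧ w * (a ^ 2 - 1) ≡ T [ZMOD M] := by
  obtain ⟨a, ha, h⟩ := h
  obtain ⟨b, hba, hb⟩ := Int.exists_modEq_isCoprime_mul hN ha
  exact ⟨b, hb, (((hba.pow 2).sub_right 1).mul_left w).trans h⟩

end HasCoprimeSolution

theorem hasCoprimeSolution_two_pow {t b T : ℤ} {r u α : ℕ} (hb : IsCoprime b 2)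
    (hα : u ≤ α ∨ r ≤ 2 ∧ α = r) (hT : 2 ^ (α + 3) ∣ T) :
    HasCoprimeSolution (24 * t + 2 ^ r * b) T (2 ^ (u + 3)) := by
  rcases hα with hu | ⟨hr, rfl⟩
  · exact .of_dvd ((pow_dvd_pow 2 (by omega)).trans hT)
  · have hw : 24 * t + 2 ^ α * b = 2 ^ α * (b + 2 * (2 ^ (2 - α) * 3 * t)) := by
      interval_cases α <;> ring
    rw [hw]
    exact .of_pow_mul (by omega) (hb.add_mul_left_left _)
      (by rwa [show (4 : ℤ) * 2 ^ (α + 1) = 2 ^ (α + 3) by ring])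

theorem hasCoprimeSolution_three_pow {t b T : ℤ} {s v β : ℕ} (hb : IsCoprime b 3)
    (hβ : v ≤ β ∨ s = 0 ∧ β = 0) (hT : 4 * 3 ^ (β + 1) ∣ T) :
    HasCoprimeSolution (24 * t + 3 ^ s * b) T (3 ^ (v + 1)) := by
  rcases hβ with hv | ⟨rfl, rfl⟩
  · exact .of_dvd ((pow_dvd_pow 3 (by omega)).trans ((dvd_mul_left _ 4).trans hT))
  · have hw : IsCoprime (24 * t + 3 ^ 0 * b) 3 := by
      rw [show 24 * t + 3 ^ 0 * b = b + 3 * (8 * t) by ring]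
      exact hb.add_mul_left_left _
    exact .of_isCoprime_pow (v + 1) hw (by simpa using hT)

theorem radu_lifting_lemma_general (m t B N : ℤ) (hN : 0 < N)
    (u v r s : ℕ) (m' B' : ℤ)
    (hmfac : m = 2 ^ u * 3 ^ v * m') (hm' : Int.gcd m' 6 = 1)
    (hBfac : B = 2 ^ r * 3 ^ s * B') (hB' : Int.gcd B' 6 = 1) :
    ∀ lam : ℤ, 0 ≤ lam →
      lam < m / (2 ^ (if r = 0 then 0 else if r ≤ 2 then min r u else u) *
                  3 ^ (if s = 0 then 0 else v) * m') →
      ∃ a : ℤ, Int.gcd a (6 * m * N) = 1 ∧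
        24 * (t + lam * (2 ^ (if r = 0 then 0 else if r ≤ 2 then min r u else u) *
                  3 ^ (if s = 0 then 0 else v) * m')) ≡
          24 * t * a ^ 2 + B * (a ^ 2 - 1) [ZMOD 24 * m] := by
  intro lam _ _
  set α := if r = 0 then 0 else if r ≤ 2 then min r u else u with hα
  set β := if s = 0 then 0 else v with hβ
  have h23 : IsCoprime (2 : ℤ) 3 := Int.isCoprime_iff_gcd_eq_one.2 rfl
  have hm'6 : IsCoprime (2 * 3) m' := (Int.isCoprime_iff_gcd_eq_one.2 hm').symm
  have hB'6 : IsCoprime B' (2 * 3) := Int.isCoprime_iff_gcd_eq_one.2 hB'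
  have h₂ : HasCoprimeSolution (24 * t + B) (24 * lam * (2 ^ α * 3 ^ β * m'))
      (2 ^ (u + 3)) := by
    rw [hBfac, mul_assoc]
    refine hasCoprimeSolution_two_pow (α := α)
      (h23.symm.pow_left.mul_left hB'6.of_mul_right_left) ?_
      (Dvd.intro (3 * lam * 3 ^ β * m') (by ring))
    rw [hα]; split_ifs <;> omega
  have h₃ : HasCoprimeSolution (24 * t + B) (24 * lam * (2 ^ α * 3 ^ β * m'))
      (3 ^ (v + 1)) := by
    rw [hBfac, show (2 : ℤ) ^ r * 3 ^ s * B' = 3 ^ s * (2 ^ r * B') by ring]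
    refine hasCoprimeSolution_three_pow (β := β)
      (h23.pow_left.mul_left hB'6.of_mul_right_right) ?_
      (Dvd.intro (2 * lam * 2 ^ α * m') (by ring))
    rw [hβ]; split_ifs <;> omega
  have hm'sol : HasCoprimeSolution (24 * t + B) (24 * lam * (2 ^ α * 3 ^ β * m')) m' :=
    .of_dvd (Dvd.intro_left (24 * lam * 2 ^ α * 3 ^ β) (by ring))
  have hm'cop : IsCoprime (2 ^ (u + 3) * 3 ^ (v + 1)) m' :=
    hm'6.of_mul_left_left.pow_left.mul_left hm'6.of_mul_left_right.pow_left
  obtain ⟨b, hb, hsol⟩ :=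
    ((h₂.mul h23.pow h₃).mul hm'cop hm'sol).exists_isCoprime_mul hN.ne'
  rw [show (2 : ℤ) ^ (u + 3) * 3 ^ (v + 1) * m' = 24 * m by rw [hmfac]; ring] at hb hsol
  refine ⟨b, Int.isCoprime_iff_gcd_eq_one.1 (hb.of_isCoprime_of_dvd_right ⟨4, by ring⟩), ?_⟩
  calc 24 * (t + lam * (2 ^ α * 3 ^ β * m'))
      = 24 * t + 24 * lam * (2 ^ α * 3 ^ β * m') := by ring
    _ ≡ 24 * t + (24 * t + B) * (b ^ 2 - 1) [ZMOD 24 * m] := hsol.symm.add_left _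
    _ = 24 * t * b ^ 2 + B * (b ^ 2 - 1) := by ring

theorem radu_lifting_lemma (m t B N : ℤ) (hm : 0 < m) (hN : 0 < N) (hB : B ≠ 0)
    (u v r s : ℕ) (m' B' : ℤ)
    (hmfac : m = 2 ^ u * 3 ^ v * m') (hm' : Int.gcd m' 6 = 1)
    (hBfac : B = 2 ^ r * 3 ^ s * B') (hB' : Int.gcd B' 6 = 1) :
    ∀ lam : ℤ, 0 ≤ lam →
      lam < m / (2 ^ (if r = 0 then 0 else if r ≤ 2 then min r u else u) *
                  3 ^ (if s = 0 then 0 else v) * m') →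
      ∃ a : ℤ, Int.gcd a (6 * m * N) = 1 ∧
        24 * (t + lam * (2 ^ (if r = 0 then 0 else if r ≤ 2 then min r u else u) *
                  3 ^ (if s = 0 then 0 else v) * m')) ≡
          24 * t * a ^ 2 + B * (a ^ 2 - 1) [ZMOD 24 * m] :=
  radu_lifting_lemma_general m t B N hN u v r s m' B' hmfac hm' hBfac hB'
end

section
/- Let c be a positive integer and d an integer with gcd(d,c) = 1. Then 6c · s(d,c) is an integer, where s(d,c) is the Dedekind sum. -/
/-!
For `1 ≤ r < c` the two factors of the summand are `r / c - 1/2` and `m_r / c - 1/2` with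
`m_r = d r mod c`. Expanding, the terms linear in `r` cancel against the constant term because
`∑ r = c (c - 1) / 2`, leaving `6 c s(d, c) = 6 ∑ r m_r / c - 3 ∑ m_r`. Finally
`6 ∑ r m_r ≡ 6 d ∑ r² = d (c - 1) c (2c - 1) ≡ 0 (mod c)`.
-/

/-- The Dedekind sum `s(d, c) = ∑_{r=1}^{c-1} ((r/c)) ((dr/c))`. -/
noncomputable def dedekindSum (d c : ℤ) : ℚ :=
  ∑ r ∈ Finset.Ico (1 : ℤ) c,
    (Int.fract ((r : ℚ) / (c : ℚ)) - 1 / 2) *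
    (Int.fract ((d : ℚ) * (r : ℚ) / (c : ℚ)) - 1 / 2)

open Finset

theorem Finset.sum_Ico_add_one_right {α M : Type*} [LinearOrder α] [One α] [LocallyFiniteOrder α]
    [Add α] [SuccAddOrder α] [NoMaxOrder α] [AddCommMonoid M] {a b : α} (hab : a ≤ b)
    (f : α → M) : ∑ x ∈ Ico a (b + 1), f x = ∑ x ∈ Ico a b, f x + f b := by
  rw [← insert_Ico_right_eq_Ico_add_one hab, sum_insert right_notMem_Ico, add_comm]

theorem two_mul_sum_Ico_one_id {c : ℤ} (hc : 1 ≤ c) :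
    2 * ∑ r ∈ Ico 1 c, r = c * (c - 1) := by
  induction c, hc using Int.leInduction with
  | base => simp
  | succ c hc ih => rw [sum_Ico_add_one_right hc, mul_add, ih]; ring

theorem six_mul_sum_Ico_one_sq {c : ℤ} (hc : 1 ≤ c) :
    6 * ∑ r ∈ Ico 1 c, r ^ 2 = (c - 1) * c * (2 * c - 1) := by
  induction c, hc using Int.leInduction with
  | base => simp
  | succ c hc ih => rw [sum_Ico_add_one_right hc, mul_add, ih]; ring

theorem sum_Ico_one_sub_two_mul {c : ℤ} (hc : 1 ≤ c) :
    ∑ r ∈ Ico 1 c, ((c : ℚ) - 2 * r) = 0 := by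
  have hcard : ((Ico 1 c).card : ℤ) = c - 1 := by
    rw [Int.card_Ico]; omega
  have hgauss : 2 * ∑ r ∈ Ico 1 c, (r : ℚ) = c * (c - 1) := by
    have h := congrArg (Int.cast : ℤ → ℚ) (two_mul_sum_Ico_one_id hc)
    push_cast at h
    exact h
  rw [sum_sub_distrib, sum_const, nsmul_eq_mul,
    show ((Ico 1 c).card : ℚ) = c - 1 by exact_mod_cast hcard, ← mul_sum, hgauss]
  ring

theorem Int.fract_intCast_div_eq_emod {c : ℤ} (hc : 0 < c) (a : ℤ) :
    Int.fract ((a : ℚ) / c) = ((a % c : ℤ) : ℚ) / c := by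
  lift c to ℕ using hc.le
  simpa using Int.fract_div_intCast_eq_div_intCast_mod (k := ℚ) (m := a) (n := c)

theorem dvd_six_mul_sum_mul_emod {c : ℤ} (hc : 0 < c) (d : ℤ) :
    c ∣ 6 * ∑ r ∈ Ico 1 c, r * (d * r % c) := by
  have hmod : ∑ r ∈ Ico 1 c, r * (d * r % c) ≡ d * ∑ r ∈ Ico 1 c, r ^ 2 [ZMOD c] := by
    rw [mul_sum]
    exact Int.ModEq.sum fun r _ => by
      simpa [sq, mul_left_comm, mul_assoc] using (Int.mod_modEq (d * r) c).mul_left r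
  have hsq : c ∣ 6 * (d * ∑ r ∈ Ico 1 c, r ^ 2) :=
    ⟨d * ((c - 1) * (2 * c - 1)), by rw [mul_left_comm, six_mul_sum_Ico_one_sq hc]; ring⟩
  exact Int.modEq_zero_iff_dvd.mp ((hmod.mul_left 6).trans (Int.modEq_zero_iff_dvd.mpr hsq))

theorem six_mul_mul_dedekindSum {c : ℤ} (hc : 0 < c) (d : ℤ) :
    6 * (c : ℚ) * dedekindSum d c =
      ((6 * ∑ r ∈ Ico 1 c, r * (d * r % c) : ℤ) : ℚ) / c -
        3 * ((∑ r ∈ Ico 1 c, d * r % c : ℤ) : ℚ) := by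
  have hcq : (c : ℚ) ≠ 0 := by exact_mod_cast hc.ne'
  have hterm : ∀ r ∈ Ico 1 c,
      6 * (c : ℚ) * ((Int.fract ((r : ℚ) / c) - 1 / 2) * (Int.fract ((d : ℚ) * r / c) - 1 / 2)) =
        (6 * (r * ((d * r % c : ℤ) : ℚ)) / c - 3 * ((d * r % c : ℤ) : ℚ)) +
          3 / 2 * (c - 2 * r) := by
    intro r hr
    obtain ⟨hr1, hrc⟩ := mem_Ico.mp hr
    have hdr : (d : ℚ) * r = ((d * r : ℤ) : ℚ) := by push_cast; ring
    rw [hdr, Int.fract_intCast_div_eq_emod hc, Int.fract_intCast_div_eq_emod hc,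
      Int.emod_eq_of_lt (by omega) hrc]
    field_simp
    ring
  rw [dedekindSum, mul_sum, sum_congr rfl hterm, sum_add_distrib, ← mul_sum,
    sum_Ico_one_sub_two_mul hc, sum_sub_distrib, ← sum_div, ← mul_sum, ← mul_sum]
  push_cast
  ring

theorem six_c_dedekind_sum_int_general (c : ℤ) (hc : 0 < c) (d : ℤ) :
    ∃ n : ℤ, (6 * (c : ℚ)) * dedekindSum d c = (n : ℚ) := by
  obtain ⟨k, hk⟩ := dvd_six_mul_sum_mul_emod hc d
  refine ⟨k - 3 * ∑ r ∈ Ico 1 c, d * r % c, ?_⟩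
  have hcq : (c : ℚ) ≠ 0 := by exact_mod_cast hc.ne'
  rw [six_mul_mul_dedekindSum hc, hk]
  push_cast
  field_simp

theorem six_c_dedekind_sum_int (c : ℤ) (hc : 0 < c) (d : ℤ) (hdc : Int.gcd d c = 1) :
    ∃ n : ℤ, (6 * (c : ℚ)) * dedekindSum d c = (n : ℚ) :=
  six_c_dedekind_sum_int_general c hc d
end

section
/- Let ℓ ≥ 5 be prime, let Q be a positive integer with gcd(Q, 6ℓ) = 1, and let t be an integer with ℓ ∤ (24t − 1) and (24t−1 | ℓ) = (−1 | ℓ). Then there exists an integer a with gcd(a, 6Qℓ) = 1 and an integer t' such that a²(24t − 1) ≡ 24t' − 1 (mod Qℓ) and 24t' ≡ 1 − Q² (mod 24ℓ). -/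
/-!
Since `(24t - 1 | ℓ) = (-1 | ℓ)`, the residue `-(24t - 1)` is a nonzero square mod `ℓ`, so
`(24t - 1) α² ≡ -1 (mod ℓ)` for some `α`. By the Chinese remainder theorem pick `a ≡ Qα (mod ℓ)`
and `a ≡ 1 (mod 6Q)`; then `a² (24t - 1) + 1 ≡ 1 - Q² (mod ℓ)`. As `24` is invertible modulo `Qℓ`,
some `t'` has `24t' ≡ a² (24t - 1) + 1 (mod Qℓ)`, and `24t' ≡ 1 - Q² (mod 24ℓ)` follows from
`24 ∣ Q² - 1`, which holds because `Q` is prime to `6`.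
-/

theorem Int.isCoprime_of_modEq_one {a n : ℤ} (h : a ≡ 1 [ZMOD n]) : IsCoprime a n := by
  obtain ⟨k, hk⟩ := Int.modEq_iff_dvd.mp h.symm
  exact ⟨1, -k, by linear_combination hk⟩

theorem Int.exists_modEq_and_modEq {m n : ℤ} (h : IsCoprime m n) (b c : ℤ) :
    ∃ a, a ≡ b [ZMOD m] ∧ a ≡ c [ZMOD n] := by
  obtain ⟨u, v, huv⟩ := h
  refine ⟨b * v * n + c * u * m, ?_, ?_⟩ <;> rw [Int.modEq_iff_dvd]
  · exact ⟨(b - c) * u, by linear_combination -b * huv⟩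
  · exact ⟨(c - b) * v, by linear_combination -c * huv⟩

theorem Int.exists_mul_modEq {m n : ℤ} (h : IsCoprime m n) (y : ℤ) : ∃ t, m * t ≡ y [ZMOD n] := by
  obtain ⟨u, v, huv⟩ := h
  exact ⟨u * y, Int.modEq_iff_dvd.mpr ⟨v * y, by linear_combination -y * huv⟩⟩

theorem Int.twentyFour_dvd_sq_sub_one_of_isCoprime_six {q : ℤ} (h : IsCoprime q 6) :
    24 ∣ q ^ 2 - 1 := by
  have h8 : 8 ∣ q ^ 2 - 1 := Int.eight_dvd_sq_sub_one_of_odd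
    (Int.isCoprime_two_right.mp (h.of_isCoprime_of_dvd_right ⟨3, rfl⟩))
  have h3 : 3 ∣ q ^ 2 - 1 :=
    Int.prime_dvd_pow_sub_one Nat.prime_three (h.of_isCoprime_of_dvd_right ⟨2, rfl⟩)
  simpa using (show IsCoprime (8 : ℤ) 3 by norm_num).mul_dvd h8 h3

theorem Int.isCoprime_twentyFour_of_isCoprime_six {q : ℤ} (h : IsCoprime q 6) :
    IsCoprime 24 q := by
  obtain ⟨k, hk⟩ := Int.twentyFour_dvd_sq_sub_one_of_isCoprime_six h
  exact ⟨-k, q, by linear_combination hk⟩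

theorem Nat.Prime.coprime_six_of_five_le {p : ℕ} (hp : p.Prime) (h : 5 ≤ p) : Nat.Coprime p 6 :=
  show Nat.Coprime p (2 * 3) from
    Nat.Coprime.mul_right ((Nat.coprime_primes hp Nat.prime_two).mpr (by omega))
      ((Nat.coprime_primes hp Nat.prime_three).mpr (by omega))

theorem legendreSym.exists_mul_sq_eq_neg_one {p : ℕ} [Fact p.Prime] {a : ℤ}
    (h : legendreSym p a = legendreSym p (-1)) : ∃ α : ZMod p, (a : ZMod p) * α ^ 2 = -1 := by
  have ha : (a : ZMod p) ≠ 0 := by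
    rw [Ne, ← legendreSym.eq_zero_iff, h, legendreSym.eq_zero_iff]; simp
  obtain ⟨b, hb⟩ : IsSquare ((-a : ℤ) : ZMod p) := by
    rw [← legendreSym.eq_one_iff p (by simpa using ha), neg_eq_neg_one_mul, legendreSym.mul, h,
      ← sq, legendreSym.sq_one p (by simp)]
  refine ⟨b / a, ?_⟩
  push_cast at hb
  field_simp
  linear_combination -hb

theorem ZMod.exists_isCoprime_mul_intCast_eq {p : ℕ} [Fact p.Prime] {m : ℤ} (hm : IsCoprime m p)
    {β : ZMod p} (hβ : β ≠ 0) : ∃ a : ℤ, IsCoprime a (m * p) ∧ (a : ZMod p) = β := by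
  obtain ⟨a, ham, hap⟩ := Int.exists_modEq_and_modEq hm 1 β.val
  have hβa : (a : ZMod p) = β := by simpa using (ZMod.intCast_eq_intCast_iff _ _ _).mpr hap
  refine ⟨a, (Int.isCoprime_of_modEq_one ham).mul_right ?_, hβa⟩
  exact ((ZMod.coe_int_isUnit_iff_isCoprime a p).mp (hβa ▸ hβ.isUnit)).symm

theorem exists_t_prime_f_general (ℓ : ℕ) [Fact ℓ.Prime] (hℓ : 5 ≤ ℓ)
    (Q : ℤ) (hQcop : Int.gcd Q (6 * ℓ) = 1)
    (t : ℤ)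
    (hleg : legendreSym ℓ (24 * t - 1) = legendreSym ℓ (-1)) :
    ∃ a t' : ℤ, Int.gcd a (6 * Q * ℓ) = 1 ∧
      a ^ 2 * (24 * t - 1) ≡ 24 * t' - 1 [ZMOD Q * ℓ] ∧
      24 * t' ≡ 1 - Q ^ 2 [ZMOD 24 * ℓ] := by
  have hQ : IsCoprime Q (6 * ℓ) := Int.isCoprime_iff_gcd_eq_one.mpr hQcop
  have hℓ6 : IsCoprime (ℓ : ℤ) 6 := by
    exact_mod_cast Nat.isCoprime_iff_coprime.mpr (Nat.Prime.coprime_six_of_five_le Fact.out hℓ)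
  have h24ℓ := Int.isCoprime_twentyFour_of_isCoprime_six hℓ6
  obtain ⟨α, hα⟩ := legendreSym.exists_mul_sq_eq_neg_one hleg
  push_cast at hα
  have hQα : (Q : ZMod ℓ) * α ≠ 0 := mul_ne_zero
    ((ZMod.coe_int_isUnit_iff_isCoprime Q ℓ).mpr hQ.of_mul_right_right.symm).ne_zero
    (by rintro rfl; simp at hα)
  obtain ⟨a, hcop, haℓ⟩ :=
    ZMod.exists_isCoprime_mul_intCast_eq (hℓ6.symm.mul_left hQ.of_mul_right_right) hQα
  have hmodℓ : a ^ 2 * (24 * t - 1) + 1 ≡ 1 - Q ^ 2 [ZMOD ℓ] := by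
    rw [← ZMod.intCast_eq_intCast_iff]
    push_cast
    rw [haℓ]
    linear_combination Q ^ 2 * hα
  obtain ⟨t', ht'⟩ := Int.exists_mul_modEq
    ((Int.isCoprime_twentyFour_of_isCoprime_six hQ.of_mul_right_left).mul_right h24ℓ)
    (a ^ 2 * (24 * t - 1) + 1)
  have hmod24 : 24 * t' ≡ 1 - Q ^ 2 [ZMOD 24] :=
    (Int.modEq_zero_iff_dvd.mpr (dvd_mul_right 24 t')).trans (Int.modEq_zero_iff_dvd.mpr
      (dvd_sub_comm.mp (Int.twentyFour_dvd_sq_sub_one_of_isCoprime_six hQ.of_mul_right_left))).symm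
  refine ⟨a, t', Int.isCoprime_iff_gcd_eq_one.mp hcop, ?_, ?_⟩
  · simpa using (ht'.sub_right 1).symm
  · exact (Int.modEq_and_modEq_iff_modEq_mul (Int.isCoprime_iff_gcd_eq_one.mp h24ℓ)).mp
      ⟨hmod24, (ht'.of_mul_left Q).trans hmodℓ⟩

theorem exists_t_prime_f (ℓ : ℕ) [Fact ℓ.Prime] (hℓ : 5 ≤ ℓ)
    (Q : ℤ) (hQ : 0 < Q) (hQcop : Int.gcd Q (6 * ℓ) = 1)
    (t : ℤ) (hnd : ¬ ((ℓ : ℤ) ∣ 24 * t - 1))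
    (hleg : legendreSym ℓ (24 * t - 1) = legendreSym ℓ (-1)) :
    ∃ a t' : ℤ, Int.gcd a (6 * Q * ℓ) = 1 ∧
      a ^ 2 * (24 * t - 1) ≡ 24 * t' - 1 [ZMOD Q * ℓ] ∧
      24 * t' ≡ 1 - Q ^ 2 [ZMOD 24 * ℓ] :=
  exists_t_prime_f_general ℓ hℓ Q hQcop t hleg
end

section
/- Let ℓ ≥ 5 be prime, Q a positive integer with gcd(Q, ℓ) = 1, j ≥ 1, and t an integer with ℓ ∤ (24t − 1). Then for each integer r with 0 ≤ r < ℓ^{j−1}, there exists an integer a with gcd(a, 6Qℓ) = 1 such that a²(24t − 1) ≡ 24(t + Qℓr) − 1 (mod Qℓ^j). -/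
/-! Write `M = 24t − 1` and `c = 24Qℓr`. Since `ℓ ∤ M`, the quotient `(M + c)/M = 1 + c·M⁻¹` makes
sense modulo `ℓ^j` and is `≡ 1 (mod ℓ)`; for odd `ℓ` every such unit is a square modulo `ℓ^j`,
with a square root `≡ 1 (mod ℓ)`. By the Chinese remainder theorem this root lifts to an `a ≡ 1
(mod 6Q)`, and modulo `Q` both sides of the congruence reduce to `M` because `Q ∣ c`. -/

theorem IsCoprime.exists_intModEq_and_intModEq {m n : ℤ} (h : IsCoprime m n) (x y : ℤ) :
    ∃ a, a ≡ x [ZMOD m] ∧ a ≡ y [ZMOD n] := by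
  obtain ⟨u, v, huv⟩ := h
  refine ⟨x * v * n + y * u * m, ?_, ?_⟩
  · exact Int.modEq_iff_dvd.mpr ⟨(x - y) * u, by linear_combination -x * huv⟩
  · exact Int.modEq_iff_dvd.mpr ⟨(y - x) * v, by linear_combination -y * huv⟩

theorem isCoprime_of_intModEq_one {a m : ℤ} (h : a ≡ 1 [ZMOD m]) : IsCoprime a m := by
  obtain ⟨k, hk⟩ := Int.modEq_iff_dvd.mp h
  exact ⟨1, k, by linear_combination -hk⟩

theorem exists_sq_intModEq_of_intModEq_one {ℓ : ℕ} (hℓ : Odd ℓ) {u : ℤ} (hu : u ≡ 1 [ZMOD ℓ])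
    (j : ℕ) : ∃ s, s ≡ 1 [ZMOD ℓ] ∧ s ^ 2 ≡ u [ZMOD ℓ ^ j] := by
  obtain ⟨k, hk⟩ := hℓ.pow (n := j)
  -- `u ^ (ℓ ^ j) ≡ 1 (mod ℓ ^ (j + 1))`, so `(u ^ (k + 1)) ^ 2 = u ^ (ℓ ^ j) * u ≡ u`.
  have hpow : u ^ ℓ ^ j ≡ 1 [ZMOD ℓ ^ j] := by
    have := dvd_sub_pow_of_dvd_sub (Int.ModEq.dvd hu.symm) j
    rw [one_pow, pow_succ] at this
    exact (Int.modEq_iff_dvd.mpr (dvd_of_mul_right_dvd this)).symm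
  refine ⟨u ^ (k + 1), by simpa using hu.pow (k + 1), ?_⟩
  calc (u ^ (k + 1)) ^ 2 = u ^ ℓ ^ j * u := by rw [← pow_mul, hk]; ring
    _ ≡ 1 * u [ZMOD ℓ ^ j] := hpow.mul_right u
    _ = u := one_mul u

theorem exists_sq_mul_intModEq_add {ℓ : ℕ} (hℓ : Odd ℓ) {M c : ℤ} (hM : IsCoprime (ℓ : ℤ) M)
    (hc : (ℓ : ℤ) ∣ c) (j : ℕ) : ∃ s, s ≡ 1 [ZMOD ℓ] ∧ s ^ 2 * M ≡ M + c [ZMOD ℓ ^ j] := by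
  obtain ⟨x, y, hxy⟩ := hM.pow_left (m := j)
  have hu : 1 + c * y ≡ 1 [ZMOD ℓ] :=
    Int.modEq_iff_dvd.mpr (by simpa using (hc.mul_right y).neg_right)
  obtain ⟨s, hs1, hs⟩ := exists_sq_intModEq_of_intModEq_one hℓ hu j
  refine ⟨s, hs1, ?_⟩
  calc s ^ 2 * M ≡ (1 + c * y) * M [ZMOD ℓ ^ j] := hs.mul_right M
    _ ≡ M + c [ZMOD ℓ ^ j] :=
      Int.modEq_iff_dvd.mpr ⟨c * x, by linear_combination -c * hxy⟩

theorem isCoprime_six_mul_of_prime {ℓ : ℕ} (hp : ℓ.Prime) (hℓ : 5 ≤ ℓ) {Q : ℤ}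
    (hQ : IsCoprime Q ℓ) : IsCoprime (6 * Q) ℓ := by
  have h2 : Nat.Coprime 2 ℓ := (Nat.coprime_primes Nat.prime_two hp).mpr (by omega)
  have h3 : Nat.Coprime 3 ℓ := (Nat.coprime_primes Nat.prime_three hp).mpr (by omega)
  have h6 : IsCoprime (6 : ℤ) ℓ := by
    simpa using Nat.isCoprime_iff_coprime.mpr (h2.mul_left h3)
  exact h6.mul_left hQ

theorem radu_reduction_f_general (ℓ : ℕ) [Fact ℓ.Prime] (hℓ : 5 ≤ ℓ)
    (Q : ℤ) (hQcop : Int.gcd Q ℓ = 1) (j : ℕ)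
    (t : ℤ) (hnd : ¬ ((ℓ : ℤ) ∣ 24 * t - 1)) :
    ∀ r : ℤ, 0 ≤ r → r < (ℓ : ℤ) ^ (j - 1) →
      ∃ a : ℤ, Int.gcd a (6 * Q * ℓ) = 1 ∧
        a ^ 2 * (24 * t - 1) ≡ 24 * (t + Q * ℓ * r) - 1 [ZMOD Q * (ℓ : ℤ) ^ j] := by
  intro r _ _
  have hp : ℓ.Prime := Fact.out
  have hQℓ : IsCoprime Q ℓ := Int.isCoprime_iff_gcd_eq_one.mpr hQcop
  have hM : IsCoprime (ℓ : ℤ) (24 * t - 1) :=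
    (Nat.prime_iff_prime_int.mp hp).coprime_iff_not_dvd.mpr hnd
  rw [show 24 * (t + Q * ℓ * r) - 1 = 24 * t - 1 + Q * (24 * ℓ * r) by ring]
  obtain ⟨s, hs1, hs⟩ := exists_sq_mul_intModEq_add (hp.odd_of_ne_two (by omega)) hM
    (c := Q * (24 * ℓ * r)) ⟨24 * Q * r, by ring⟩ j
  -- The modulus `ℓ ^ (j + 1)` also gives `a ≡ s ≡ 1 (mod ℓ)`.
  obtain ⟨a, ha6Q, haℓ⟩ := ((isCoprime_six_mul_of_prime hp hℓ hQℓ).pow_right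
    (n := j + 1)).exists_intModEq_and_intModEq 1 s
  rw [pow_succ] at haℓ
  refine ⟨a, Int.isCoprime_iff_gcd_eq_one.mp ?_, ?_⟩
  · exact (isCoprime_of_intModEq_one ha6Q).mul_right
      (isCoprime_of_intModEq_one ((haℓ.of_mul_left _).trans hs1))
  rw [← Int.modEq_and_modEq_iff_modEq_mul (Int.isCoprime_iff_nat_coprime.mp hQℓ.pow_right)]
  constructor
  · calc a ^ 2 * (24 * t - 1) ≡ 1 ^ 2 * (24 * t - 1) [ZMOD Q] :=
          ((ha6Q.of_mul_left 6).pow 2).mul_right _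
      _ ≡ 24 * t - 1 + Q * (24 * ℓ * r) [ZMOD Q] :=
          Int.modEq_iff_dvd.mpr ⟨24 * ℓ * r, by ring⟩
  · exact (((haℓ.of_mul_right _).pow 2).mul_right _).trans hs

theorem radu_reduction_f (ℓ : ℕ) [Fact ℓ.Prime] (hℓ : 5 ≤ ℓ)
    (Q : ℤ) (hQ : 0 < Q) (hQcop : Int.gcd Q ℓ = 1) (j : ℕ) (hj : 1 ≤ j)
    (t : ℤ) (hnd : ¬ ((ℓ : ℤ) ∣ 24 * t - 1)) :
    ∀ r : ℤ, 0 ≤ r → r < (ℓ : ℤ) ^ (j - 1) →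
      ∃ a : ℤ, Int.gcd a (6 * Q * ℓ) = 1 ∧
        a ^ 2 * (24 * t - 1) ≡ 24 * (t + Q * ℓ * r) - 1 [ZMOD Q * (ℓ : ℤ) ^ j] :=
  radu_reduction_f_general ℓ hℓ Q hQcop j t hnd
end

section
/- Let ℓ ≥ 5 be prime, Q a positive integer with gcd(Q, 3ℓ) = 1, j ≥ 1, and t an integer with ℓ ∤ (3t + 2). Then for each integer r with 0 ≤ r < ℓ^{j−1}, there exists an integer a with gcd(a, 6Qℓ) = 1 such that a²(3t + 2) ≡ 3(t + Qℓr) + 2 (mod Qℓ^j). -/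
/-!
Write `d = 3t + 2` and `d' = 3(t + Qℓr) + 2`. Since `d' ≡ d (mod ℓ)` and `ℓ ∤ d`, the ratio
`u = d'/d (mod ℓ^j)` is `≡ 1 (mod ℓ)`. For odd `n`, every `u ≡ 1 (mod n)` is a square modulo
`n^(k+1)`: lifting the exponent gives `u^(n^k) ≡ 1 (mod n^(k+1))`, so `u ≡ (u^((n^k+1)/2))^2`, and this root
is again `≡ 1 (mod n)`. The Chinese remainder theorem glues this root modulo `ℓ^j` with `1`
modulo `6Q`; modulo `Q` the congruence holds trivially because `d' ≡ d (mod Q)`.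
-/

namespace Int

theorem exists_modEq_and_modEq_of_isCoprime {m n : ℤ} (h : IsCoprime m n) (x y : ℤ) :
    ∃ a, a ≡ x [ZMOD m] ∧ a ≡ y [ZMOD n] := by
  obtain ⟨u, v, huv⟩ := h
  refine ⟨x * v * n + y * u * m, ?_, ?_⟩ <;> rw [Int.modEq_iff_dvd]
  · exact ⟨(x - y) * u, by linear_combination (-x) * huv⟩
  · exact ⟨(y - x) * v, by linear_combination (-y) * huv⟩

theorem isCoprime_of_modEq_one_s9 {a n : ℤ} (h : a ≡ 1 [ZMOD n]) : IsCoprime a n := by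
  obtain ⟨k, hk⟩ := Int.modEq_iff_dvd.mp h.symm
  exact ⟨1, -k, by linear_combination hk⟩

theorem exists_sq_modEq_of_modEq_one_s9 {n : ℕ} (hn : Odd n) {u : ℤ} (hu : u ≡ 1 [ZMOD n])
    (k : ℕ) : ∃ s, s ≡ 1 [ZMOD n] ∧ s ^ 2 ≡ u [ZMOD n ^ (k + 1)] := by
  obtain ⟨m, hm⟩ := (hn.pow : Odd (n ^ k))
  refine ⟨u ^ (m + 1), by simpa using hu.pow (m + 1), ?_⟩
  have hpow : u ^ n ^ k ≡ 1 [ZMOD n ^ (k + 1)] := by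
    have := dvd_sub_pow_of_dvd_sub (Int.modEq_iff_dvd.mp hu.symm) k
    rw [one_pow] at this
    exact (Int.modEq_iff_dvd.mpr this).symm
  calc (u ^ (m + 1)) ^ 2 = u ^ n ^ k * u := by rw [hm, ← pow_mul, ← pow_succ]; ring_nf
    _ ≡ 1 * u [ZMOD n ^ (k + 1)] := hpow.mul_right u
    _ = u := one_mul u

theorem exists_sq_mul_modEq_of_modEq {n : ℕ} (hn : Odd n) {d d' : ℤ} (hd : IsCoprime d n)
    (h : d' ≡ d [ZMOD n]) (k : ℕ) : ∃ s, s ≡ 1 [ZMOD n] ∧ s ^ 2 * d ≡ d' [ZMOD n ^ k] := by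
  obtain ⟨c, e, hce⟩ := hd.pow_right (n := k + 1)
  have hcd : c * d ≡ 1 [ZMOD n ^ (k + 1)] :=
    Int.modEq_iff_dvd.mpr ⟨e, by linear_combination -hce⟩
  have hu : c * d' ≡ 1 [ZMOD n] :=
    (h.mul_left c).trans (hcd.of_dvd (dvd_pow_self _ k.succ_ne_zero))
  obtain ⟨s, hs1, hs⟩ := exists_sq_modEq_of_modEq_one_s9 hn hu k
  refine ⟨s, hs1, Int.ModEq.of_dvd (pow_dvd_pow _ k.le_succ) ?_⟩
  calc s ^ 2 * d ≡ c * d' * d [ZMOD n ^ (k + 1)] := hs.mul_right d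
    _ = c * d * d' := by ring
    _ ≡ 1 * d' [ZMOD n ^ (k + 1)] := hcd.mul_right d'
    _ = d' := one_mul d'

end Int

theorem Nat.Prime.isCoprime_six {p : ℕ} (hp : p.Prime) (h5 : 5 ≤ p) : IsCoprime (6 : ℤ) p := by
  rw [show (6 : ℤ) = 2 * 3 by norm_num, IsCoprime.mul_left_iff]
  constructor <;> exact_mod_cast Nat.isCoprime_iff_coprime.mpr
    ((Nat.coprime_primes (by norm_num) hp).mpr (by omega))

open Int in
theorem radu_reduction_omega_general (ℓ : ℕ) [Fact ℓ.Prime] (hℓ : 5 ≤ ℓ)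
    (Q : ℤ) (hQcop : Int.gcd Q (3 * ℓ) = 1) (j : ℕ) (hj : 1 ≤ j)
    (t : ℤ) (hnd : ¬ ((ℓ : ℤ) ∣ 3 * t + 2)) :
    ∀ r : ℤ, 0 ≤ r → r < (ℓ : ℤ) ^ (j - 1) →
      ∃ a : ℤ, Int.gcd a (6 * Q * ℓ) = 1 ∧
        a ^ 2 * (3 * t + 2) ≡ 3 * (t + Q * ℓ * r) + 2 [ZMOD Q * (ℓ : ℤ) ^ j] := by
  intro r _ _
  have hp : ℓ.Prime := Fact.out
  have hQℓ : IsCoprime Q ℓ := (isCoprime_iff_gcd_eq_one.mpr hQcop).of_mul_right_right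
  have hdℓ : IsCoprime (3 * t + 2) ℓ :=
    ((Nat.prime_iff_prime_int.mp hp).coprime_iff_not_dvd.mpr hnd).symm
  obtain ⟨s, hs1, hs⟩ := exists_sq_mul_modEq_of_modEq (hp.odd_of_ne_two (by omega)) hdℓ
    (d' := 3 * (t + Q * ℓ * r) + 2) (modEq_iff_dvd.mpr ⟨-(3 * Q * r), by ring⟩) j
  have h6Qℓ : IsCoprime (6 * Q) ((ℓ : ℤ) ^ j) := ((hp.isCoprime_six hℓ).mul_left hQℓ).pow_right
  obtain ⟨a, ha6Q, haℓ⟩ := exists_modEq_and_modEq_of_isCoprime h6Qℓ 1 s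
  have haℓ1 : a ≡ 1 [ZMOD ℓ] := (haℓ.of_dvd (dvd_pow_self _ (by omega))).trans hs1
  refine ⟨a, isCoprime_iff_gcd_eq_one.mp ((isCoprime_of_modEq_one_s9 ha6Q).mul_right
    (isCoprime_of_modEq_one_s9 haℓ1)), ?_⟩
  refine (modEq_and_modEq_iff_modEq_mul (isCoprime_iff_gcd_eq_one.mp hQℓ.pow_right)).mp ⟨?_, ?_⟩
  · calc a ^ 2 * (3 * t + 2) ≡ 1 ^ 2 * (3 * t + 2) [ZMOD Q] :=
          ((ha6Q.of_dvd (dvd_mul_left Q 6)).pow 2).mul_right _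
      _ ≡ 3 * (t + Q * ℓ * r) + 2 [ZMOD Q] := modEq_iff_dvd.mpr ⟨3 * ℓ * r, by ring⟩
  · exact ((haℓ.pow 2).mul_right _).trans hs

theorem radu_reduction_omega (ℓ : ℕ) [Fact ℓ.Prime] (hℓ : 5 ≤ ℓ)
    (Q : ℤ) (hQ : 0 < Q) (hQcop : Int.gcd Q (3 * ℓ) = 1) (j : ℕ) (hj : 1 ≤ j)
    (t : ℤ) (hnd : ¬ ((ℓ : ℤ) ∣ 3 * t + 2)) :
    ∀ r : ℤ, 0 ≤ r → r < (ℓ : ℤ) ^ (j - 1) →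
      ∃ a : ℤ, Int.gcd a (6 * Q * ℓ) = 1 ∧
        a ^ 2 * (3 * t + 2) ≡ 3 * (t + Q * ℓ * r) + 2 [ZMOD Q * (ℓ : ℤ) ^ j] :=
  radu_reduction_omega_general ℓ hℓ Q hQcop j hj t hnd
end
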